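/- arXiv:1901.05154 — 3 statements merged into one kernel-verified Lean document; each statement's English description precedes it below -/
import Mathlib

section
/- Fix w ≤ 0, u ∈ ℝ^N, u₀ ∈ ℝ, and any point a^m ∈ ℝ^N. Define φ = w·u·𝟙(u⊤a^m + u₀ > 0) and φ₀ = w·u₀·𝟙(u⊤a^m + u₀ > 0), where 𝟙 is the indicator of positivity. Then for all a ∈ ℝ^N, w·max{u⊤a + u₀, 0} ≤ φ⊤a + φ₀. -/
open Finset

theorem mul_le_max_zero {α : Type*} [Ring α] [LinearOrder α] [IsOrderedRing α] {c t : α}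
    (hc₀ : 0 ≤ c) (hc₁ : c ≤ 1) : c * t ≤ max t 0 :=
  calc c * t ≤ c * max t 0 := mul_le_mul_of_nonneg_left (le_max_left t 0) hc₀
    _ ≤ 1 * max t 0 := mul_le_mul_of_nonneg_right hc₁ (le_max_right t 0)
    _ = max t 0 := one_mul _

/-- Validity of the gradient-based cut for neurons with nonpositive weight:
with `φ = w·u·𝟙(u⊤aᵐ + u₀ > 0)` and `φ₀ = w·u₀·𝟙(u⊤aᵐ + u₀ > 0)`,
we have `w·max(u⊤a + u₀, 0) ≤ φ⊤a + φ₀` for all `a`. -/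
theorem neg_weight_gradient_cut_valid (N : ℕ) (w : ℝ) (hw : w ≤ 0)
    (u : Fin N → ℝ) (u₀ : ℝ) (am : Fin N → ℝ) :
    ∀ a : Fin N → ℝ,
      w * max (∑ i, u i * a i + u₀) 0 ≤
        (∑ i, (w * u i * (if 0 < ∑ j, u j * am j + u₀ then (1 : ℝ) else 0)) * a i) +
          w * u₀ * (if 0 < ∑ j, u j * am j + u₀ then (1 : ℝ) else 0) := by
  intro a
  set c : ℝ := if 0 < ∑ j, u j * am j + u₀ then 1 else 0 with hc
  have hc₀ : 0 ≤ c := by positivity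
  have hc₁ : c ≤ 1 := by rw [hc]; split_ifs <;> norm_num
  have cut_eq : (∑ i, w * u i * c * a i) + w * u₀ * c = w * (c * (∑ i, u i * a i + u₀)) := by
    rw [mul_add, mul_add, mul_sum, mul_sum]
    congr 1
    · exact sum_congr rfl fun i _ => by ring
    · ring
  rw [cut_eq]
  exact mul_le_mul_of_nonpos_left (mul_le_max_zero hc₀ hc₁) hw
end

section
/- Under the setting of the previous statement (w > 0, M⁻ ≤ 0 ≤ M⁺, ϑ = M⁺/(Σ_n |Γ_n| ā_n) ∈ [0,1]), define θ_n = w Γ_n ϑ for all n and θ₀ = −w ϑ Σ_{n∈N⁻} Γ_n ā_n. Then for every a in the box [0, ā]: (i) Σ_n θ_n a_n + θ₀ ≥ w(Γ⊤a + Γ₂), (ii) Σ_n θ_n a_n + θ₀ ≥ 0, hence Σ_n θ_n a_n + θ₀ ≥ w·max{Γ⊤a + Γ₂, 0}. -/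
/-!
Write `s = Γ⊤a`, `lo = Σ_{Γ n < 0} Γ n ā n` and `hi = Σ_{Γ n ≥ 0} Γ n ā n`. On the box, `s` ranges
over `[lo, hi]`, and `hi - lo = Σ |Γ n| ā n`. The cut equals `w ϑ (s - lo)`: the secant of
`s ↦ w · max (s + Γ₂) 0` through `(lo, 0)` and `(hi, w (hi + Γ₂))`. Because `M⁻ ≤ 0 ≤ M⁺`, its slope
`ϑ` lies in `[0, 1]`, so it is nonnegative on `[lo, hi]` and dominates `w (s + Γ₂)` there.
-/

open Finset

section BoxSums

variable {ι : Type*} [Fintype ι] (Γ abar : ι → ℝ)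

theorem sum_filter_neg_mul_le_sum_mul {a : ι → ℝ} (ha : ∀ n, 0 ≤ a n ∧ a n ≤ abar n) :
    ∑ n ∈ univ.filter fun n => Γ n < 0, Γ n * abar n ≤ ∑ n, Γ n * a n := by
  rw [sum_filter]
  refine sum_le_sum fun n _ => ?_
  split_ifs with hn
  · exact mul_le_mul_of_nonpos_left (ha n).2 hn.le
  · exact mul_nonneg (not_lt.mp hn) (ha n).1

theorem sum_mul_le_sum_filter_nonneg_mul {a : ι → ℝ} (ha : ∀ n, 0 ≤ a n ∧ a n ≤ abar n) :
    ∑ n, Γ n * a n ≤ ∑ n ∈ univ.filter fun n => 0 ≤ Γ n, Γ n * abar n := by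
  rw [sum_filter]
  refine sum_le_sum fun n _ => ?_
  split_ifs with hn
  · exact mul_le_mul_of_nonneg_left (ha n).2 hn
  · exact mul_nonpos_of_nonpos_of_nonneg (not_le.mp hn).le (ha n).1

theorem sum_abs_mul_eq_sub :
    ∑ n, |Γ n| * abar n =
      (∑ n ∈ univ.filter fun n => 0 ≤ Γ n, Γ n * abar n) -
        ∑ n ∈ univ.filter fun n => Γ n < 0, Γ n * abar n := by
  rw [sum_filter, sum_filter, ← sum_sub_distrib]
  refine sum_congr rfl fun n _ => ?_
  rcases le_or_gt 0 (Γ n) with hn | hn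
  · simp [hn, not_lt.mpr hn, abs_of_nonneg hn]
  · simp [hn, not_le.mpr hn, abs_of_neg hn]

theorem sum_abs_mul_pos (hΓ : Γ ≠ 0) (habar : ∀ n, 0 < abar n) :
    0 < ∑ n, |Γ n| * abar n := by
  obtain ⟨m, hm⟩ := Function.ne_iff.mp hΓ
  exact sum_pos' (fun n _ => mul_nonneg (abs_nonneg _) (habar n).le)
    ⟨m, mem_univ m, mul_pos (abs_pos.mpr hm) (habar m)⟩

end BoxSums

theorem add_le_secant_mul {lo hi s c : ℝ} (hlo : lo < hi) (hc : lo + c ≤ 0) (hs : s ≤ hi) :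
    s + c ≤ (hi + c) / (hi - lo) * (s - lo) := by
  have hD : 0 < hi - lo := sub_pos.mpr hlo
  have hslope : (hi + c) / (hi - lo) ≤ 1 := (div_le_one hD).mpr (by linarith)
  have hsecant : (hi + c) / (hi - lo) * (hi - lo) = hi + c := div_mul_cancel₀ _ hD.ne'
  -- the gap is `(1 - slope) * (hi - s)`
  nlinarith [mul_nonneg (sub_nonneg.mpr hslope) (sub_nonneg.mpr hs)]

/-- Validity of the cut for positive-weight neurons in the interior case:
with `ϑ = M⁺ / Σ |Γ n| ā n`, `θ n = w Γ n ϑ` and `θ₀ = −w ϑ Σ_{Γ n < 0} Γ n ā n`,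
for every `a` in the box `[0, ā]` we have
`Σ θ n a n + θ₀ ≥ w (Γ⊤a + Γ₂)`, `Σ θ n a n + θ₀ ≥ 0`, hence
`Σ θ n a n + θ₀ ≥ w · max (Γ⊤a + Γ₂) 0`. -/
theorem pos_weight_cut_valid (N : ℕ) (w : ℝ) (hw : 0 < w)
    (Γ : Fin N → ℝ) (hΓ : Γ ≠ 0) (Γ₂ : ℝ) (abar : Fin N → ℝ)
    (habar : ∀ n, 0 < abar n)
    (hMm : (∑ n ∈ univ.filter fun n => Γ n < 0, Γ n * abar n) + Γ₂ ≤ 0)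
    (hMp : 0 ≤ (∑ n ∈ univ.filter fun n => 0 ≤ Γ n, Γ n * abar n) + Γ₂)
    (ϑ : ℝ)
    (hϑ : ϑ = ((∑ n ∈ univ.filter fun n => 0 ≤ Γ n, Γ n * abar n) + Γ₂) /
            (∑ n, |Γ n| * abar n))
    (θ : Fin N → ℝ) (hθ : ∀ n, θ n = w * Γ n * ϑ)
    (θ₀ : ℝ) (hθ₀ : θ₀ = -w * ϑ * ∑ n ∈ univ.filter fun n => Γ n < 0, Γ n * abar n) :
    ∀ a : Fin N → ℝ, (∀ n, 0 ≤ a n ∧ a n ≤ abar n) →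
      w * (∑ n, Γ n * a n + Γ₂) ≤ (∑ n, θ n * a n) + θ₀ ∧
      0 ≤ (∑ n, θ n * a n) + θ₀ ∧
      w * max (∑ n, Γ n * a n + Γ₂) 0 ≤ (∑ n, θ n * a n) + θ₀ := by
  intro a ha
  have hD := sum_abs_mul_pos Γ abar hΓ habar
  rw [sum_abs_mul_eq_sub] at hD hϑ
  have hlo := sum_filter_neg_mul_le_sum_mul Γ abar ha
  have hcut : ∑ n, θ n * a n + θ₀ =
      w * (ϑ * (∑ n, Γ n * a n - ∑ n ∈ univ.filter fun n => Γ n < 0, Γ n * abar n)) := by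
    have hθsum : ∑ n, θ n * a n = w * ϑ * ∑ n, Γ n * a n := by
      rw [mul_sum]
      exact sum_congr rfl fun n _ => by rw [hθ]; ring
    rw [hθsum, hθ₀]
    ring
  have hsecant : w * (∑ n, Γ n * a n + Γ₂) ≤ ∑ n, θ n * a n + θ₀ := by
    rw [hcut, hϑ]
    exact mul_le_mul_of_nonneg_left
      (add_le_secant_mul (sub_pos.mp hD) hMm (sum_mul_le_sum_filter_nonneg_mul Γ abar ha)) hw.le
  have hnonneg : 0 ≤ ∑ n, θ n * a n + θ₀ := by
    rw [hcut, hϑ]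
    exact mul_nonneg hw.le (mul_nonneg (div_nonneg hMp hD.le) (sub_nonneg.mpr hlo))
  refine ⟨hsecant, hnonneg, ?_⟩
  rw [mul_max_of_nonneg _ _ hw.le, mul_zero]
  exact max_le hsecant hnonneg
end

section
/- The integer optimality cut is valid: if η̄ ≥ v(a) for all a ∈ A, and ζ^k : A → ℤ satisfies ζ^k(a^k) = 0 and ζ^k(a) ≥ 1 for a ≠ a^k, then for all a ∈ A, v(a) ≤ v(a^k) + ζ^k(a)(η̄ − v(a^k)). -/
lemma le_add_mul_sub_of_one_le {α : Type*} [Ring α] [LinearOrder α] [IsStrictOrderedRing α]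
    {x y c t : α} (hx : x ≤ c) (hy : y ≤ c) (ht : 1 ≤ t) : x ≤ y + t * (c - y) :=
  calc x ≤ y + (c - y) := by rw [add_sub_cancel]; exact hx
    _ ≤ y + t * (c - y) := add_le_add_right (le_mul_of_one_le_left (sub_nonneg.2 hy) ht) y

theorem integer_optimality_cut_valid_general
    (A : Type*)
    (v : A → ℝ) (ηbar : ℝ) (ak : A) (ζ : A → ℤ)
    (hηbar : ∀ a, v a ≤ ηbar)
    (hζ0 : ζ ak = 0)
    (hζ1 : ∀ a, a ≠ ak → 1 ≤ ζ a) :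
    ∀ a, v a ≤ v ak + (ζ a : ℝ) * (ηbar - v ak) := by
  intro a
  rcases eq_or_ne a ak with rfl | h
  · simp [hζ0]
  · exact le_add_mul_sub_of_one_le (hηbar a) (hηbar ak) (by exact_mod_cast hζ1 a h)

/-- Validity of the Laporte–Louveaux integer optimality cut: if `η̄` is an upper
bound for `v` on `A` and `ζ` vanishes exactly at `aᵏ` and is at least `1`
elsewhere, then `v a ≤ v aᵏ + ζ a (η̄ − v aᵏ)` for all `a`. -/
theorem integer_optimality_cut_valid
    (A : Type*) [Fintype A] [Nonempty A]
    (v : A → ℝ) (ηbar : ℝ) (ak : A) (ζ : A → ℤ)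
    (hηbar : ∀ a, v a ≤ ηbar)
    (hζ0 : ζ ak = 0)
    (hζ1 : ∀ a, a ≠ ak → 1 ≤ ζ a) :
    ∀ a, v a ≤ v ak + (ζ a : ℝ) * (ηbar - v ak) :=
  integer_optimality_cut_valid_general A v ηbar ak ζ hηbar hζ0 hζ1
end
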